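/- Assume all the data of the standard scarred-sequence setting except the norm hypothesis on A_N, and instead suppose that for each N the unit vector A_N is an eigenvector of the reference Hamiltonian Σ_{i∈I_N} P_{N,i} with (necessarily nonnegative real) eigenvalue ε_N, and that ε_N → 0 as N → ∞. Suppose additionally given self-adjoint operators h_{N,i} supported on X_{N,i} with ‖h_{N,i}‖ ≤ C_h (C_h a constant independent of N and i), a depth D ∈ ℕ independent of N, and layers L_{N,1}, …, L_{N,D} ⊆ I_N with pairwise disjoint supports within each layer. Then (a) ‖(Σ_{i∈I_N} P_{N,i} ∘ h_{N,i} ∘ P_{N,i}) A_N‖ → 0 as N → ∞, and (b) ‖U_N A_N − A_N‖ → 0 as N → ∞, where U_N = exp(√−1 · H_N^{(D)}) ∘ ⋯ ∘ exp(√−1 · H_N^{(1)}) with H_N^{(ℓ)} = Σ_{i∈L_{N,ℓ}} P_{N,i} ∘ h_{N,i} ∘ P_{N,i}. -/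

import Mathlib

open Filter
open scoped BigOperators

noncomputable section

/-- The `M`-qudit space: complex functions on configurations `Fin M → Fin d`,
with the standard (Euclidean) inner product. -/
abbrev QuditSpace (d M : ℕ) : Type := EuclideanSpace ℂ (Fin M → Fin d)

/-- The computational basis vector indexed by the configuration `s`. -/
def basisVec {d M : ℕ} (s : Fin M → Fin d) : QuditSpace d M :=
  EuclideanSpace.single s 1

/-- The matrix element `⟨e_s, T e_t⟩` of an operator `T` on the qudit space. -/
def matElem {d M : ℕ} (T : QuditSpace d M →L[ℂ] QuditSpace d M)
    (s t : Fin M → Fin d) : ℂ :=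
  inner ℂ (basisVec s) (T (basisVec t))

/-- `T` is supported on the set of sites `X`: its matrix elements vanish whenever the two
configurations differ at a site outside `X`, and (among configuration pairs agreeing
outside `X`) they depend only on the restrictions of the configurations to `X`. -/
def SupportedOn {d M : ℕ} (X : Finset (Fin M))
    (T : QuditSpace d M →L[ℂ] QuditSpace d M) : Prop :=
  (∀ s t : Fin M → Fin d, (∃ j ∉ X, s j ≠ t j) → matElem T s t = 0) ∧
  (∀ s t s' t' : Fin M → Fin d,
      (∀ j ∈ X, s j = s' j) → (∀ j ∈ X, t j = t' j) →
      (∀ j ∉ X, s j = t j) → (∀ j ∉ X, s' j = t' j) →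
      matElem T s t = matElem T s' t')

/-- An orthogonal projection: a self-adjoint idempotent operator. -/
def IsOrthProj {d M : ℕ} (P : QuditSpace d M →L[ℂ] QuditSpace d M) : Prop :=
  (∀ v w : QuditSpace d M, (inner ℂ (P v) w : ℂ) = inner ℂ v (P w)) ∧ P ∘L P = P

/-!
Write `p i = P i A` and `u i = (P i h i P i) A` and expand `‖∑ i ∈ S, u i‖²` into the pair terms
`re ⟪u i, u j⟫`. If the supports of `i` and `j` are disjoint, all four local operators commute,
`u i` and `u j` are compressions by the single projection `P i P j`, and the pair term is at most
`Ch² re ⟪p i, p j⟫ = Ch² ‖P i P j A‖² ≥ 0`; otherwise it is at most `Ch² ‖p i‖ ‖p j‖` by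
Cauchy–Schwarz. Now `∑ i j, re ⟪p i, p j⟫ = ‖∑ p i‖² = ε²`, `∑ ‖p i‖² = ⟪A, ∑ P i A⟫ = ε`, and each
`i` overlaps at most `C + 1` indices (itself included), so the overlapping pairs contribute at most
`(C + 1) ∑ ‖p i‖² = (C + 1) ε`. Hence `‖∑ i ∈ S, u i‖² ≤ Ch² (ε² + 2 (C + 1) ε)` for every `S`.
For (b), `exp (i H)` is unitary with `‖exp (i H) A - A‖ ≤ ‖H A‖` (mean value theorem along
`t ↦ exp (i t H) A`), and a product of unitaries moves `A` by at most the sum of the individual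
displacements.
-/

open Finset
open scoped InnerProductSpace

lemma sum_sum_ite_mul_le {ι : Type*} [Fintype ι] {R : ι → ι → Prop} [DecidableRel R]
    [Std.Symm R] {n : ℕ} (hn : ∀ i, #{j | R i j} ≤ n) (x : ι → ℝ) :
    ∑ i, ∑ j, (if R i j then x i * x j else 0) ≤ n * ∑ i, x i ^ 2 := by
  have hrow : ∑ i, ∑ j, (if R i j then x i ^ 2 else 0) ≤ n * ∑ i, x i ^ 2 := by
    simp only [← sum_filter, sum_const, nsmul_eq_mul, mul_sum]
    exact sum_le_sum fun i _ => by gcongr; exact_mod_cast hn i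
  have hcol : ∑ i, ∑ j, (if R i j then x j ^ 2 else 0) =
      ∑ i, ∑ j, (if R i j then x i ^ 2 else 0) := by
    rw [sum_comm]
    exact sum_congr rfl fun i _ => sum_congr rfl fun j _ => by simp only [Std.Symm.iff j i]
  calc ∑ i, ∑ j, (if R i j then x i * x j else 0)
      ≤ ∑ i, ∑ j, ((if R i j then x i ^ 2 else 0) + (if R i j then x j ^ 2 else 0)) / 2 := by
        gcongr with i _ j _
        split_ifs
        · nlinarith [sq_nonneg (x i - x j)]
        · simp
    _ ≤ n * ∑ i, x i ^ 2 := by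
        simp only [← sum_div, sum_add_distrib, hcol]
        linarith

lemma card_filter_le_card_filter_ne_add_one {α : Type*} [Fintype α] [DecidableEq α]
    (p : α → Prop) [DecidablePred p] (a : α) : #{x | p x} ≤ #{x | x ≠ a ∧ p x} + 1 := by
  refine (card_le_card fun x hx => ?_).trans (card_insert_le a _)
  by_cases hxa : x = a <;> simp_all

section HilbertSpace

variable {E : Type*} [NormedAddCommGroup E] [InnerProductSpace ℂ E]

lemma norm_sum_sq_eq_sum_sum_re_inner {ι : Type*} (s : Finset ι) (x : ι → E) :
    ‖∑ i ∈ s, x i‖ ^ 2 = ∑ i ∈ s, ∑ j ∈ s, RCLike.re ⟪x i, x j⟫_ℂ := by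
  simp only [← inner_self_eq_norm_sq (𝕜 := ℂ), sum_inner, inner_sum, map_sum]
  exact sum_comm

variable [CompleteSpace E]

lemma IsSelfAdjoint.inner_apply_left {a : E →L[ℂ] E} (ha : IsSelfAdjoint a) (x y : E) :
    ⟪a x, y⟫_ℂ = ⟪x, a y⟫_ℂ :=
  ha.isSymmetric x y

namespace IsStarProjection

variable {p q : E →L[ℂ] E}

lemma norm_apply_le (hp : IsStarProjection p) (x : E) : ‖p x‖ ≤ ‖x‖ :=
  p.le_of_opNorm_le_of_le hp.norm_le le_rfl |>.trans_eq (one_mul _)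

lemma re_inner_self_apply (hp : IsStarProjection p) (x : E) :
    RCLike.re ⟪x, p x⟫_ℂ = ‖p x‖ ^ 2 := by
  have hpp : p (p x) = p x := congr($(hp.isIdempotentElem.eq) x)
  rw [← hpp, ← hp.isSelfAdjoint.inner_apply_left, hpp, inner_self_eq_norm_sq]

lemma re_inner_apply_apply_of_commute (hp : IsStarProjection p) (hq : IsStarProjection q)
    (hpq : Commute p q) (x : E) : RCLike.re ⟪p x, q x⟫_ℂ = ‖(p * q) x‖ ^ 2 := by
  rw [hp.isSelfAdjoint.inner_apply_left, ← (hp.mul hq hpq).re_inner_self_apply]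
  rfl

lemma isSelfAdjoint_conj (hp : IsStarProjection p) {a : E →L[ℂ] E} (ha : IsSelfAdjoint a) :
    IsSelfAdjoint (p * a * p) := by
  simpa only [hp.isSelfAdjoint.star_eq] using ha.conjugate' p

lemma norm_conj_apply_le (hp : IsStarProjection p) (a : E →L[ℂ] E) (x : E) :
    ‖(p * a * p) x‖ ≤ ‖a‖ * ‖p x‖ :=
  (hp.norm_apply_le _).trans (a.le_opNorm _)

lemma re_inner_conj_apply_le (hp : IsStarProjection p) (hq : IsStarProjection q)
    (a b : E →L[ℂ] E) (x : E) :
    RCLike.re ⟪(p * a * p) x, (q * b * q) x⟫_ℂ ≤ ‖a‖ * ‖b‖ * (‖p x‖ * ‖q x‖) :=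
  calc RCLike.re ⟪(p * a * p) x, (q * b * q) x⟫_ℂ
      ≤ ‖(p * a * p) x‖ * ‖(q * b * q) x‖ := re_inner_le_norm _ _
    _ ≤ ‖a‖ * ‖p x‖ * (‖b‖ * ‖q x‖) := by
      gcongr
      exacts [hp.norm_conj_apply_le a x, hq.norm_conj_apply_le b x]
    _ = ‖a‖ * ‖b‖ * (‖p x‖ * ‖q x‖) := by ring

lemma re_inner_conj_apply_le_of_commute (hp : IsStarProjection p) (hq : IsStarProjection q)
    {a b : E →L[ℂ] E} (ha : IsSelfAdjoint a) (hpq : Commute p q) (hpb : Commute p b)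
    (haq : Commute a q) (x : E) :
    RCLike.re ⟪(p * a * p) x, (q * b * q) x⟫_ℂ ≤ ‖a‖ * ‖b‖ * RCLike.re ⟪p x, q x⟫_ℂ := by
  have hconj : p * a * p * (q * b * q) = p * q * (a * b) * (p * q) :=
    calc p * a * p * (q * b * q) = p * a * (p * q) * b * q := by simp only [mul_assoc]
      _ = p * (a * q) * (p * b) * q := by rw [hpq.eq]; simp only [mul_assoc]
      _ = p * q * (a * b) * (p * q) := by rw [haq.eq, hpb.eq]; simp only [mul_assoc]
  calc RCLike.re ⟪(p * a * p) x, (q * b * q) x⟫_ℂ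
      = RCLike.re ⟪(p * q) x, (a * b) ((p * q) x)⟫_ℂ := by
        rw [(hp.isSelfAdjoint_conj ha).inner_apply_left, ← mul_apply_eq_comp, hconj,
          (hp.mul hq hpq).isSelfAdjoint.inner_apply_left]
        rfl
    _ ≤ ‖(p * q) x‖ * (‖a * b‖ * ‖(p * q) x‖) :=
        (re_inner_le_norm _ _).trans (by gcongr; exact ContinuousLinearMap.le_opNorm _ _)
    _ ≤ ‖a‖ * ‖b‖ * ‖(p * q) x‖ ^ 2 := by
        nlinarith [norm_mul_le a b, sq_nonneg ‖(p * q) x‖, norm_nonneg ((p * q) x)]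
    _ = ‖a‖ * ‖b‖ * RCLike.re ⟪p x, q x⟫_ℂ := by rw [hp.re_inner_apply_apply_of_commute hq hpq]

lemma re_inner_conj_apply_le_weight {p q a b : E →L[ℂ] E} (hp : IsStarProjection p)
    (hq : IsStarProjection q) (ha : IsSelfAdjoint a) {c : ℝ} (hab : ‖a‖ * ‖b‖ ≤ c ^ 2)
    {overlap : Prop} [Decidable overlap]
    (hcomm : ¬ overlap → Commute p q ∧ Commute p b ∧ Commute a q) (x : E) :
    0 ≤ RCLike.re ⟪p x, q x⟫_ℂ + (if overlap then 2 * (‖p x‖ * ‖q x‖) else 0) ∧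
      RCLike.re ⟪(p * a * p) x, (q * b * q) x⟫_ℂ ≤
        c ^ 2 * (RCLike.re ⟪p x, q x⟫_ℂ + if overlap then 2 * (‖p x‖ * ‖q x‖) else 0) := by
  by_cases h : overlap
  · have hpq : |RCLike.re ⟪p x, q x⟫_ℂ| ≤ ‖p x‖ * ‖q x‖ :=
      (RCLike.abs_re_le_norm _).trans (norm_inner_le_norm _ _)
    have := hp.re_inner_conj_apply_le hq a b x
    simp only [if_pos h]
    constructor
    · linarith [abs_le.mp hpq]
    · nlinarith [abs_le.mp hpq, mul_nonneg (norm_nonneg (p x)) (norm_nonneg (q x)),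
        mul_nonneg (norm_nonneg a) (norm_nonneg b)]
  · obtain ⟨hpq, hpb, haq⟩ := hcomm h
    simp only [if_neg h, add_zero]
    refine ⟨?_, (hp.re_inner_conj_apply_le_of_commute hq ha hpq hpb haq x).trans ?_⟩
    · rw [hp.re_inner_apply_apply_of_commute hq hpq]
      positivity
    · gcongr
      rw [hp.re_inner_apply_apply_of_commute hq hpq]
      positivity

end IsStarProjection

theorem norm_sum_conj_apply_sq_le {ι : Type*} [Fintype ι] {R : ι → ι → Prop} [DecidableRel R]
    [Std.Symm R] {n : ℕ} (hn : ∀ i, #{j | R i j} ≤ n) {p a : ι → E →L[ℂ] E}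
    (hp : ∀ i, IsStarProjection (p i)) (ha : ∀ i, IsSelfAdjoint (a i)) {c : ℝ}
    (hc : ∀ i, ‖a i‖ ≤ c)
    (hcomm : ∀ i j, ¬ R i j → Commute (p i) (p j) ∧ Commute (p i) (a j)) (s : Finset ι)
    (v : E) :
    ‖(∑ i ∈ s, p i * a i * p i) v‖ ^ 2 ≤
      c ^ 2 * (‖(∑ i, p i) v‖ ^ 2 + 2 * n * ∑ i, ‖p i v‖ ^ 2) := by
  set w : ι → ι → ℝ := fun i j =>
    RCLike.re ⟪p i v, p j v⟫_ℂ + if R i j then 2 * (‖p i v‖ * ‖p j v‖) else 0 with hw_def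
  have hw (i j : ι) := (hp i).re_inner_conj_apply_le_weight (hp j) (ha i) (b := a j)
    (c := c) (overlap := R i j)
    (by nlinarith [hc i, hc j, norm_nonneg (a i), norm_nonneg (a j)])
    (fun hij => ⟨(hcomm i j hij).1, (hcomm i j hij).2,
      (hcomm j i fun hji => hij (Std.Symm.symm _ _ hji)).2.symm⟩) v
  calc ‖(∑ i ∈ s, p i * a i * p i) v‖ ^ 2
      = ∑ i ∈ s, ∑ j ∈ s, RCLike.re ⟪(p i * a i * p i) v, (p j * a j * p j) v⟫_ℂ := by
        rw [_root_.sum_apply, norm_sum_sq_eq_sum_sum_re_inner]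
    _ ≤ ∑ i ∈ s, ∑ j ∈ s, c ^ 2 * w i j := by gcongr with i _ j _; exact (hw i j).2
    _ ≤ ∑ i, ∑ j, c ^ 2 * w i j :=
        (sum_le_sum fun i _ => sum_le_univ_sum_of_nonneg fun j =>
          mul_nonneg (sq_nonneg c) (hw i j).1).trans
        (sum_le_univ_sum_of_nonneg fun i => sum_nonneg fun j _ =>
          mul_nonneg (sq_nonneg c) (hw i j).1)
    _ = c ^ 2 * (‖(∑ i, p i) v‖ ^ 2 +
          2 * ∑ i, ∑ j, if R i j then ‖p i v‖ * ‖p j v‖ else 0) := by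
        simp only [hw_def, ← mul_sum, sum_add_distrib, _root_.sum_apply,
          norm_sum_sq_eq_sum_sum_re_inner, ← mul_ite_zero]
    _ ≤ c ^ 2 * (‖(∑ i, p i) v‖ ^ 2 + 2 * n * ∑ i, ‖p i v‖ ^ 2) := by
        rw [mul_assoc 2]
        gcongr
        exact sum_sum_ite_mul_le hn _

theorem norm_sum_conj_apply_le_of_eigen {ι : Type*} [Fintype ι] {R : ι → ι → Prop}
    [DecidableRel R] [Std.Symm R] {n : ℕ} (hn : ∀ i, #{j | R i j} ≤ n) {p a : ι → E →L[ℂ] E}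
    (hp : ∀ i, IsStarProjection (p i)) (ha : ∀ i, IsSelfAdjoint (a i)) {c : ℝ}
    (hc : ∀ i, ‖a i‖ ≤ c)
    (hcomm : ∀ i j, ¬ R i j → Commute (p i) (p j) ∧ Commute (p i) (a j)) {v : E} (hv : ‖v‖ = 1)
    {ε : ℝ} (hε : (∑ i, p i) v = (ε : ℂ) • v) (s : Finset ι) :
    ‖(∑ i ∈ s, p i * a i * p i) v‖ ≤ √(c ^ 2 * (ε ^ 2 + 2 * n * ε)) := by
  have hnorm : ‖(∑ i, p i) v‖ ^ 2 = ε ^ 2 := by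
    rw [hε, norm_smul, hv, mul_one, Complex.norm_real, Real.norm_eq_abs, sq_abs]
  have hmass : ∑ i, ‖p i v‖ ^ 2 = ε := by
    have := congr(RCLike.re ⟪v, $hε⟫_ℂ)
    simp only [_root_.sum_apply, inner_sum, map_sum, (hp _).re_inner_self_apply] at this
    rw [this, inner_smul_right, inner_self_eq_norm_sq_to_K, hv]
    simp
  rw [← hnorm, ← hmass]
  exact Real.le_sqrt_of_sq_le (norm_sum_conj_apply_sq_le hn hp ha hc hcomm s v)

open NormedSpace

lemma ContinuousLinearMap.exp_mem_unitary {b : E →L[ℂ] E} (hb : b ∈ skewAdjoint (E →L[ℂ] E)) :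
    exp b ∈ unitary (E →L[ℂ] E) :=
  -- there is no global `ℚ`-algebra instance here; any one will do, as `exp` does not depend on it
  let _ : NormedAlgebra ℚ (E →L[ℂ] E) := .restrictScalars ℚ ℂ _
  exp_mem_unitary_of_mem_skewAdjoint hb

lemma ContinuousLinearMap.norm_exp_apply_sub_self_le {b : E →L[ℂ] E}
    (hb : b ∈ skewAdjoint (E →L[ℂ] E)) (v : E) : ‖exp b v - v‖ ≤ ‖b v‖ := by
  have hderiv (t : ℝ) : HasDerivAt (fun t : ℝ => exp (t • b) v) ((exp (t • b) * b) v) t := by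
    have hev := ((apply ℂ E v).restrictScalars ℝ).hasFDerivAt (x := exp (t • b))
    exact hev.comp_hasDerivAt t (hasDerivAt_exp_smul_const b t)
  have hskew (t : ℝ) : t • b ∈ skewAdjoint (E →L[ℂ] E) := skewAdjoint.smul_mem t hb
  have := norm_image_sub_le_of_norm_deriv_le_segment_01' (C := ‖b v‖)
    (fun t _ => (hderiv t).hasDerivWithinAt)
    (fun t _ => (norm_map_of_mem_unitary (exp_mem_unitary (hskew t)) (b v)).le)
  simpa using this

lemma norm_exp_I_smul_apply_sub_self_le {a : E →L[ℂ] E} (ha : IsSelfAdjoint a) (v : E) :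
    ‖exp (Complex.I • a) v - v‖ ≤ ‖a v‖ := by
  simpa [norm_smul] using
    ContinuousLinearMap.norm_exp_apply_sub_self_le (ha.I_smul_mem_skewAdjoint (K := ℂ)) v

lemma norm_list_prod_apply_sub_le {l : List (E →L[ℂ] E)}
    (hl : ∀ g ∈ l, g ∈ unitary (E →L[ℂ] E)) (v : E) :
    ‖l.prod v - v‖ ≤ (l.map fun g => ‖g v - v‖).sum := by
  induction l with
  | nil => simp
  | cons g l ih =>
    calc ‖(g :: l).prod v - v‖ = ‖g (l.prod v - v) + (g v - v)‖ := by
          rw [List.prod_cons, mul_apply_eq_comp, map_sub, sub_add_sub_cancel]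
      _ ≤ ‖l.prod v - v‖ + ‖g v - v‖ := by
          rw [← ContinuousLinearMap.norm_map_of_mem_unitary (hl g List.mem_cons_self)
            (l.prod v - v)]
          exact norm_add_le _ _
      _ ≤ ((g :: l).map fun g => ‖g v - v‖).sum := by
          rw [List.map_cons, List.sum_cons, add_comm]
          gcongr
          exact ih fun g' hg' => hl g' (List.mem_cons_of_mem g hg')

lemma norm_prod_exp_I_smul_apply_sub_le {D : ℕ} {H : Fin D → E →L[ℂ] E}
    (hH : ∀ ℓ, IsSelfAdjoint (H ℓ)) (v : E) :
    ‖(List.ofFn fun ℓ => exp (Complex.I • H ℓ)).reverse.prod v - v‖ ≤ ∑ ℓ, ‖H ℓ v‖ := by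
  have hunit (ℓ : Fin D) : exp (Complex.I • H ℓ) ∈ unitary (E →L[ℂ] E) :=
    ContinuousLinearMap.exp_mem_unitary ((hH ℓ).I_smul_mem_skewAdjoint (K := ℂ))
  calc _ ≤ ((List.ofFn fun ℓ => exp (Complex.I • H ℓ)).reverse.map fun g => ‖g v - v‖).sum :=
        norm_list_prod_apply_sub_le (by simpa using hunit) v
    _ = ∑ ℓ, ‖exp (Complex.I • H ℓ) v - v‖ := by
        simp only [List.map_reverse, List.sum_reverse, List.map_ofFn, List.sum_ofFn]
        rfl
    _ ≤ ∑ ℓ, ‖H ℓ v‖ := sum_le_sum fun ℓ _ => norm_exp_I_smul_apply_sub_self_le (hH ℓ) v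

end HilbertSpace

namespace QuditSpace

variable {d M : ℕ}

lemma matElem_eq_toMatrix (T : QuditSpace d M →L[ℂ] QuditSpace d M) (s t : Fin M → Fin d) :
    matElem T s t =
      LinearMap.toMatrix (EuclideanSpace.basisFun _ ℂ).toBasis
        (EuclideanSpace.basisFun _ ℂ).toBasis T s t := by
  simp [matElem, basisVec, LinearMap.toMatrix_apply, EuclideanSpace.inner_single_left]

lemma matElem_mul (S T : QuditSpace d M →L[ℂ] QuditSpace d M) (s t : Fin M → Fin d) :
    matElem (S * T) s t = ∑ u, matElem S s u * matElem T u t := by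
  simp only [matElem_eq_toMatrix, ContinuousLinearMap.toLinearMap_mul, LinearMap.toMatrix_mul,
    Matrix.mul_apply]

lemma ext_matElem {S T : QuditSpace d M →L[ℂ] QuditSpace d M}
    (h : ∀ s t, matElem S s t = matElem T s t) : S = T := by
  refine ContinuousLinearMap.coe_injective <| (LinearMap.toMatrix
    (EuclideanSpace.basisFun _ ℂ).toBasis (EuclideanSpace.basisFun _ ℂ).toBasis).injective ?_
  ext s t
  simpa only [matElem_eq_toMatrix] using h s t

end QuditSpace

namespace SupportedOn

variable {d M : ℕ} {X Y : Finset (Fin M)} {S T : QuditSpace d M →L[ℂ] QuditSpace d M}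

lemma matElem_eq_zero (hS : SupportedOn X S) {s t : Fin M → Fin d} {j : Fin M} (hj : j ∉ X)
    (hst : s j ≠ t j) : matElem S s t = 0 :=
  hS.1 s t ⟨j, hj, hst⟩

lemma matElem_mul_eq (hS : SupportedOn X S) (hT : SupportedOn Y T) (hXY : Disjoint X Y)
    (s t : Fin M → Fin d) :
    matElem (S * T) s t =
      matElem S s (X.piecewise t s : Fin M → Fin d) * matElem T (X.piecewise t s) t := by
  rw [QuditSpace.matElem_mul]
  refine sum_eq_single (X.piecewise t s) (fun u _ hu => ?_) (by simp)
  obtain ⟨j, hj⟩ := Function.ne_iff.mp hu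
  by_cases hjX : j ∈ X
  · rw [piecewise_eq_of_mem _ _ _ hjX] at hj
    rw [hT.matElem_eq_zero (disjoint_left.mp hXY hjX) hj, mul_zero]
  · rw [piecewise_eq_of_notMem _ _ _ hjX] at hj
    rw [hS.matElem_eq_zero hjX (Ne.symm hj), zero_mul]

theorem commute (hS : SupportedOn X S) (hT : SupportedOn Y T) (hXY : Disjoint X Y) :
    Commute S T := by
  refine QuditSpace.ext_matElem fun s t => ?_
  rw [hS.matElem_mul_eq hT hXY, hT.matElem_mul_eq hS hXY.symm]
  by_cases hst : ∀ j ∉ X ∪ Y, s j = t j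
  · -- as `s = t` off `X ∪ Y`, locality identifies the factors crosswise
    have hXY' : ∀ j ∈ X, j ∉ Y := disjoint_left.mp hXY
    rw [mul_comm]
    congr 1
    · exact hT.2 _ _ _ _ (by grind [piecewise]) (by grind [piecewise]) (by grind [piecewise])
        (by grind [piecewise])
    · exact hS.2 _ _ _ _ (by grind [piecewise]) (by grind [piecewise]) (by grind [piecewise])
        (by grind [piecewise])
  · push Not at hst
    obtain ⟨j, hj, hst⟩ := hst
    rw [mem_union, not_or] at hj
    rw [hT.matElem_eq_zero (s := X.piecewise t s) hj.2
        (by rwa [piecewise_eq_of_notMem _ _ _ hj.1]),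
      hS.matElem_eq_zero (s := Y.piecewise t s) hj.1
        (by rwa [piecewise_eq_of_notMem _ _ _ hj.2]), mul_zero, mul_zero]

end SupportedOn

lemma IsOrthProj.isStarProjection {d M : ℕ} {P : QuditSpace d M →L[ℂ] QuditSpace d M}
    (hP : IsOrthProj P) : IsStarProjection P :=
  ⟨hP.2, ContinuousLinearMap.isSelfAdjoint_iff_isSymmetric.mpr hP.1⟩

theorem norm_sum_conj_apply_le_of_supportedOn {d M : ℕ} {ι : Type*} [Fintype ι] [DecidableEq ι]
    {X : ι → Finset (Fin M)} {P h : ι → QuditSpace d M →L[ℂ] QuditSpace d M} {C : ℕ}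
    (hC : ∀ i, #{i' | i' ≠ i ∧ (X i ∩ X i').Nonempty} ≤ C) (hP : ∀ i, IsOrthProj (P i))
    (hPX : ∀ i, SupportedOn (X i) (P i)) (hh : ∀ i, IsSelfAdjoint (h i))
    (hhX : ∀ i, SupportedOn (X i) (h i)) {c : ℝ} (hc : ∀ i, ‖h i‖ ≤ c)
    {v : QuditSpace d M} (hv : ‖v‖ = 1) {ε : ℝ} (hε : (∑ i, P i) v = (ε : ℂ) • v)
    (s : Finset ι) :
    ‖(∑ i ∈ s, P i * h i * P i) v‖ ≤ √(c ^ 2 * (ε ^ 2 + 2 * (C + 1) * ε)) := by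
  have : Std.Symm fun i j => (X i ∩ X j).Nonempty := ⟨fun i j => by rw [inter_comm]; exact id⟩
  have hcomm (i j : ι) (hij : ¬ (X i ∩ X j).Nonempty) :
      Commute (P i) (P j) ∧ Commute (P i) (h j) :=
    have hXij := disjoint_iff_inter_eq_empty.mpr (not_nonempty_iff_eq_empty.mp hij)
    ⟨(hPX i).commute (hPX j) hXij, (hPX i).commute (hhX j) hXij⟩
  exact_mod_cast norm_sum_conj_apply_le_of_eigen (R := fun i j => (X i ∩ X j).Nonempty)
    (fun i => (card_filter_le_card_filter_ne_add_one _ i).trans (Nat.add_le_add_right (hC i) 1))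
    (fun i => (hP i).isStarProjection) hh hc hcomm hv hε s

theorem aqmbs_of_gapless_excitations_general
    (d C : ℕ)
    (M : ℕ → ℕ) (I : ℕ → Type) [∀ N, Fintype (I N)] [∀ N, DecidableEq (I N)]
    (X : ∀ N, I N → Finset (Fin (M N)))
    (P : ∀ N, (i : I N) → QuditSpace d (M N) →L[ℂ] QuditSpace d (M N))
    (A : ∀ N, QuditSpace d (M N))
    (hC : ∀ N (i : I N),
      (Finset.univ.filter fun i' : I N => i' ≠ i ∧ (X N i ∩ X N i').Nonempty).card ≤ C)
    (hproj : ∀ N (i : I N), IsOrthProj (P N i))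
    (hsupp : ∀ N (i : I N), SupportedOn (X N i) (P N i))
    (hA : ∀ N, ‖A N‖ = 1)
    (eps : ℕ → ℝ)
    (heig : ∀ N, (∑ i : I N, P N i) (A N) = (eps N : ℂ) • A N)
    (heps : Tendsto eps atTop (nhds 0))
    (Ch : ℝ)
    (h : ∀ N, (i : I N) → QuditSpace d (M N) →L[ℂ] QuditSpace d (M N))
    (hhsa : ∀ N (i : I N), ∀ v w : QuditSpace d (M N),
      (inner ℂ ((h N i) v) w : ℂ) = inner ℂ v ((h N i) w))
    (hhsupp : ∀ N (i : I N), SupportedOn (X N i) (h N i))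
    (hhnorm : ∀ N (i : I N), ‖h N i‖ ≤ Ch)
    (D : ℕ) (L : ∀ N, Fin D → Finset (I N))
 :
    Tendsto (fun N => ‖(∑ i : I N, (P N i) ∘L (h N i) ∘L (P N i)) (A N)‖) atTop (nhds 0) ∧
    Tendsto (fun N =>
        ‖(((List.ofFn fun ℓ : Fin D =>
          NormedSpace.exp (Complex.I •
            (∑ i ∈ L N ℓ, (P N i) ∘L (h N i) ∘L (P N i)))).reverse).prod) (A N) - A N‖)
      atTop (nhds 0) := by
  set bound : ℕ → ℝ := fun N => √(Ch ^ 2 * (eps N ^ 2 + 2 * (C + 1) * eps N))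
  have hh (N : ℕ) (i : I N) : IsSelfAdjoint (h N i) :=
    ContinuousLinearMap.isSelfAdjoint_iff_isSymmetric.mpr (hhsa N i)
  have hbound (N : ℕ) (s : Finset (I N)) :
      ‖(∑ i ∈ s, P N i ∘L h N i ∘L P N i) (A N)‖ ≤ bound N :=
    norm_sum_conj_apply_le_of_supportedOn (hC N) (hproj N) (hsupp N) (hh N) (hhsupp N)
      (hhnorm N) (hA N) (heig N) s
  have hlayer (N : ℕ) (ℓ : Fin D) : IsSelfAdjoint (∑ i ∈ L N ℓ, P N i ∘L h N i ∘L P N i) :=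
    isSelfAdjoint_sum _ fun i _ => (hproj N i).isStarProjection.isSelfAdjoint_conj (hh N i)
  have hlim : Tendsto bound atTop (nhds 0) := by
    simpa [bound, Function.comp_def] using ((by fun_prop : Continuous fun x : ℝ =>
      √(Ch ^ 2 * (x ^ 2 + 2 * (C + 1) * x))).tendsto 0).comp heps
  refine ⟨squeeze_zero (fun _ => norm_nonneg _) (fun N => hbound N univ) hlim,
    squeeze_zero (fun _ => norm_nonneg _) (fun N => ?_) (by simpa using hlim.const_mul (D : ℝ))⟩
  calc _ ≤ ∑ ℓ, ‖(∑ i ∈ L N ℓ, P N i ∘L h N i ∘L P N i) (A N)‖ :=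
        norm_prod_exp_I_smul_apply_sub_le (hlayer N) _
    _ ≤ ∑ _ℓ : Fin D, bound N := sum_le_sum fun ℓ _ => hbound N _
    _ = D * bound N := by simp

/-- **Theorem 2 of the paper**: if the unit vectors `A_N` are eigenvectors of the reference
Hamiltonian `∑ i P_{N,i}` with eigenvalues `ε_N → 0` (gapless excitations), then (a) they are
asymptotically annihilated by the deformed Hamiltonian `∑ i P_{N,i} ∘ h_{N,i} ∘ P_{N,i}`, and
(b) they are asymptotic fixed points of the finite-depth circuit
`U_N = exp(i H_N^{(D)}) ∘ ⋯ ∘ exp(i H_N^{(1)})`,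
`H_N^{(ℓ)} = ∑_{i ∈ L_{N,ℓ}} P_{N,i} ∘ h_{N,i} ∘ P_{N,i}`: they are asymptotic quantum
many-body scars. -/
theorem aqmbs_of_gapless_excitations
    (d K C : ℕ) (hd : 2 ≤ d)
    (M : ℕ → ℕ) (I : ℕ → Type) [∀ N, Fintype (I N)] [∀ N, DecidableEq (I N)]
    (X : ∀ N, I N → Finset (Fin (M N)))
    (P : ∀ N, (i : I N) → QuditSpace d (M N) →L[ℂ] QuditSpace d (M N))
    (A : ∀ N, QuditSpace d (M N))
    (hK : ∀ N (i : I N), (X N i).card ≤ K)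
    (hC : ∀ N (i : I N),
      (Finset.univ.filter fun i' : I N => i' ≠ i ∧ (X N i ∩ X N i').Nonempty).card ≤ C)
    (hproj : ∀ N (i : I N), IsOrthProj (P N i))
    (hsupp : ∀ N (i : I N), SupportedOn (X N i) (P N i))
    (hA : ∀ N, ‖A N‖ = 1)
    (eps : ℕ → ℝ)
    (heig : ∀ N, (∑ i : I N, P N i) (A N) = (eps N : ℂ) • A N)
    (heps : Tendsto eps atTop (nhds 0))
    (Ch : ℝ) (hCh : 0 ≤ Ch)
    (h : ∀ N, (i : I N) → QuditSpace d (M N) →L[ℂ] QuditSpace d (M N))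
    (hhsa : ∀ N (i : I N), ∀ v w : QuditSpace d (M N),
      (inner ℂ ((h N i) v) w : ℂ) = inner ℂ v ((h N i) w))
    (hhsupp : ∀ N (i : I N), SupportedOn (X N i) (h N i))
    (hhnorm : ∀ N (i : I N), ‖h N i‖ ≤ Ch)
    (D : ℕ) (L : ∀ N, Fin D → Finset (I N))
    (hLdisj : ∀ N (ℓ : Fin D), ∀ i ∈ L N ℓ, ∀ i' ∈ L N ℓ, i ≠ i' → Disjoint (X N i) (X N i'))
 :
    Tendsto (fun N => ‖(∑ i : I N, (P N i) ∘L (h N i) ∘L (P N i)) (A N)‖) atTop (nhds 0) ∧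
    Tendsto (fun N =>
        ‖(((List.ofFn fun ℓ : Fin D =>
          NormedSpace.exp (Complex.I •
            (∑ i ∈ L N ℓ, (P N i) ∘L (h N i) ∘L (P N i)))).reverse).prod) (A N) - A N‖)
      atTop (nhds 0) :=
  aqmbs_of_gapless_excitations_general d C M I X P A hC hproj hsupp hA eps heig heps Ch h hhsa
    hhsupp hhnorm D L
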